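/- arXiv:2012.10851 — 9 statements merged into one kernel-verified Lean document; each statement's English description precedes it below -/
import Mathlib

section
/- Let S be a monoid acting continuously on a compact Hausdorff space X. If for every x ∈ X the orbit closure cl(Sx) equals X (i.e., the semiflow is minimal), then every point x₀ ∈ X is almost periodic: for every open neighborhood U of x₀, setting A = {s ∈ S : s·x₀ ∈ U}, there exists a finite set K ⊆ S such that for every s ∈ S, (K·s) ∩ A ≠ ∅. -/
theorem stmt1 {S X : Type*} [Monoid S] [TopologicalSpace S]
    [TopologicalSpace X] [CompactSpace X] [T2Space X]
    [MulAction S X] [ContinuousSMul S X]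
    (hmin : ∀ x : X, closure (Set.range fun s : S => s • x) = Set.univ)
    (x₀ : X) (U : Set X) (hU : IsOpen U) (hx₀ : x₀ ∈ U) :
    ∃ K : Finset S, ∀ s : S, ∃ k ∈ K, (k * s) • x₀ ∈ U := by
  have hcov : Set.univ ⊆ ⋃ k : S, (fun y : X => k • y) ⁻¹' U := by
    intro y _
    have hy : x₀ ∈ closure (Set.range fun s : S => s • y) := by
      rw [hmin y]; trivial
    rcases mem_closure_iff.mp hy U hU hx₀ with ⟨z, hzU, s, hs⟩
    exact Set.mem_iUnion.mpr ⟨s, by simpa [hs] using hzU⟩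
  obtain ⟨K, hK⟩ := isCompact_univ.elim_finite_subcover
    (fun k : S => (fun y : X => k • y) ⁻¹' U)
    (fun k => hU.preimage (continuous_const_smul k)) hcov
  refine ⟨K, fun s => ?_⟩
  rcases Set.mem_iUnion₂.mp (hK (Set.mem_univ (s • x₀))) with ⟨k, hk, hku⟩
  exact ⟨k, hk, by simpa [mul_smul] using hku⟩
end

section
/- Let S be a monoid acting continuously on a compact Hausdorff space X and let x ∈ X. If x is almost periodic (for every open neighborhood U of x, with A = {s ∈ S : s·x ∈ U}, there exists a finite K ⊆ S with (K·s) ∩ A ≠ ∅ for all s ∈ S), then the orbit closure cl(Sx) is a minimal closed invariant set. -/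
open Filter Topology

theorem stmt2 {S X : Type*} [Monoid S]
    [TopologicalSpace X] [CompactSpace X] [T2Space X]
    [MulAction S X] [ContinuousConstSMul S X]
    (x : X)
    (hap : ∀ U : Set X, IsOpen U → x ∈ U →
      ∃ K : Finset S, ∀ s : S, ∃ k ∈ K, (k * s) • x ∈ U) :
    (closure (Set.range fun s : S => s • x)).Nonempty ∧
    IsClosed (closure (Set.range fun s : S => s • x)) ∧
    (∀ s : S, ∀ y ∈ closure (Set.range fun s : S => s • x),
      s • y ∈ closure (Set.range fun s : S => s • x)) ∧
    (∀ N ⊆ closure (Set.range fun s : S => s • x), N.Nonempty → IsClosed N →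
      (∀ s : S, ∀ y ∈ N, s • y ∈ N) → N = closure (Set.range fun s : S => s • x)) := by
  set f : S → X := fun s => s • x with hf
  have hxmem : x ∈ Set.range f := ⟨1, one_smul S x⟩
  have hinv : ∀ s : S, ∀ y ∈ closure (Set.range f), s • y ∈ closure (Set.range f) := by
    intro s y hy
    have hc : Continuous fun z : X => s • z := continuous_const_smul s
    have : s • y ∈ closure ((fun z : X => s • z) '' Set.range f) := by
      exact (hc.continuousOn).image_closure ⟨y, hy, rfl⟩
    refine closure_mono ?_ this
    rintro _ ⟨_, ⟨t, rfl⟩, rfl⟩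
    exact ⟨s * t, by simp [hf, mul_smul]⟩
  refine ⟨⟨x, subset_closure hxmem⟩, isClosed_closure, hinv, ?_⟩
  intro N hNsub hNne hNcl hNinv
  -- Key step: x ∈ N.
  obtain ⟨y, hyN⟩ := hNne
  have hyM : y ∈ closure (Set.range f) := hNsub hyN
  -- ultrafilter on S converging (via f) to y
  have hcomap : (comap f (𝓝 y)).NeBot := by
    refine Filter.comap_neBot fun V hV => ?_
    rcases mem_closure_iff_nhds.1 hyM V hV with ⟨z, hzV, s, rfl⟩
    exact ⟨s, hzV⟩
  set v : Ultrafilter S := Ultrafilter.of (comap f (𝓝 y)) with hv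
  have hvt : Tendsto f v (𝓝 y) :=
    (Filter.map_mono (Ultrafilter.of_le _)).trans map_comap_le
  -- For every open U ∋ x, N meets closure U.
  have key : ∀ U : Set X, IsOpen U → x ∈ U → (N ∩ closure U).Nonempty := by
    intro U hU hxU
    obtain ⟨K, hK⟩ := hap U hU hxU
    have hcover : (⋃ k ∈ K, {s : S | (k * s) • x ∈ U}) ∈ v := by
      have : (⋃ k ∈ K, {s : S | (k * s) • x ∈ U}) = Set.univ := by
        ext s; simp only [Set.mem_iUnion, Set.mem_univ, iff_true]
        obtain ⟨k, hk, hks⟩ := hK s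
        exact ⟨k, hk, hks⟩
      rw [this]; exact Filter.univ_mem
    obtain ⟨k, hkK, hkv⟩ := (Ultrafilter.finite_biUnion_mem_iff K.finite_toSet).1 hcover
    refine ⟨k • y, hNinv k y hyN, ?_⟩
    rw [mem_closure_iff_nhds]
    intro V hV
    have htend : Tendsto (fun s : S => k • f s) v (𝓝 (k • y)) := hvt.const_smul k
    have hVmem : {s : S | k • f s ∈ V} ∈ v := htend hV
    obtain ⟨s, hs1, hs2⟩ := Filter.nonempty_of_mem (Filter.inter_mem hVmem hkv)
    refine ⟨k • f s, hs1, ?_⟩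
    simpa [hf, smul_smul] using hs2
  -- Compactness: intersect over all open neighborhoods of x.
  have hNcomp : IsCompact N := hNcl.isCompact
  obtain ⟨z, hzN, hz⟩ :
      (N ∩ ⋂ U : {U : Set X // IsOpen U ∧ x ∈ U}, closure U.1).Nonempty := by
    refine hNcomp.inter_iInter_nonempty _ (fun U => isClosed_closure) fun t => ?_
    set V : Set X := ⋂ U ∈ t, (U : {U : Set X // IsOpen U ∧ x ∈ U}).1 with hV
    have hVopen : IsOpen V := isOpen_biInter_finset fun U _ => U.2.1
    have hxV : x ∈ V := Set.mem_biInter fun U _ => U.2.2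
    obtain ⟨z, hzN, hzV⟩ := key V hVopen hxV
    refine ⟨z, hzN, Set.mem_biInter fun U hU => ?_⟩
    exact closure_mono (Set.biInter_subset_of_mem hU) hzV
  have hzx : z = x := by
    by_contra hne
    obtain ⟨A, B, hA, hB, hxA, hzB, hAB⟩ := t2_separation (Ne.symm hne)
    have : z ∈ closure A := by
      have := Set.mem_iInter.1 hz ⟨A, hA, hxA⟩
      exact this
    have hclA : closure A ⊆ Bᶜ :=
      closure_minimal (fun a ha hb => Set.disjoint_iff.1 hAB ⟨ha, hb⟩) hB.isClosed_compl
    exact hclA this hzB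
  have hxN : x ∈ N := hzx ▸ hzN
  refine le_antisymm hNsub ?_
  refine closure_minimal ?_ hNcl
  rintro _ ⟨s, rfl⟩
  exact hNinv s x hxN
end

section
/- Every continuous action of a monoid S on a nonempty compact Hausdorff space X admits an almost periodic point: there exists x ∈ X such that for every open neighborhood U of x, with A = {s ∈ S : s·x ∈ U}, there is a finite K ⊆ S with (K·s) ∩ A ≠ ∅ for all s ∈ S. -/
theorem stmt3 {S X : Type*} [Monoid S] [TopologicalSpace S]
    [TopologicalSpace X] [CompactSpace X] [T2Space X] [Nonempty X]
    [MulAction S X] [ContinuousSMul S X] :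
    ∃ x : X, ∀ U : Set X, IsOpen U → x ∈ U →
      ∃ K : Finset S, ∀ s : S, ∃ k ∈ K, (k * s) • x ∈ U := by
  -- Family of nonempty closed invariant sets
  set F : Set (Set X) := {M | M.Nonempty ∧ IsClosed M ∧ ∀ s : S, ∀ y ∈ M, s • y ∈ M} with hF
  obtain ⟨M, -, hMmin⟩ := zorn_superset_nonempty F
    (fun c hcF hc hcne => by
      refine ⟨⋂₀ c, ⟨?_, ?_, ?_⟩, fun s hs => Set.sInter_subset_of_mem hs⟩
      · -- nonempty by compactness
        have hdir : DirectedOn (· ⊇ ·) c := IsChain.directedOn hc.symm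
        have : Nonempty c := hcne.to_subtype
        exact IsCompact.nonempty_sInter_of_directed_nonempty_isCompact_isClosed
          hdir (fun t ht => (hcF ht).1)
          (fun t ht => (hcF ht).2.1.isCompact) (fun t ht => (hcF ht).2.1)
      · exact isClosed_sInter fun t ht => (hcF ht).2.1
      · intro s y hy t ht
        exact (hcF ht).2.2 s y (hy t ht))
    Set.univ ⟨Set.univ_nonempty, isClosed_univ, fun _ _ _ => Set.mem_univ _⟩
  obtain ⟨⟨x, hxM⟩, hMcl, hMinv⟩ := hMmin.prop
  refine ⟨x, fun U hU hxU => ?_⟩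
  -- every y ∈ M has some s with s • y ∈ U, by minimality (orbit closure of y = M)
  have key : ∀ y ∈ M, ∃ s : S, s • y ∈ U := by
    intro y hyM
    by_contra h
    push_neg at h
    -- closure of orbit of y is a closed invariant subset of M avoiding U ∋ x
    set N := closure (MulAction.orbit S y) with hN
    have hNM : N ⊆ M := by
      apply hMcl.closure_subset_iff.mpr
      rintro _ ⟨s, rfl⟩; exact hMinv s y hyM
    have hNF : N ∈ F := by
      refine ⟨⟨y, subset_closure ⟨1, one_smul S y⟩⟩, isClosed_closure, fun s z hz => ?_⟩
      have hcont : Continuous fun w : X => s • w := continuous_const_smul s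
      have : Set.MapsTo (fun w : X => s • w) (MulAction.orbit S y) N := by
        rintro _ ⟨t, rfl⟩
        exact subset_closure ⟨s * t, (mul_smul s t y)⟩
      exact (this.closure_left hcont isClosed_closure) hz
    have hMN : M ⊆ N := hMmin.2 hNF hNM
    have hxN : x ∈ N := hMN hxM
    -- but N avoids U since orbit of y avoids U
    have : N ⊆ Uᶜ := by
      apply (hU.isClosed_compl).closure_subset_iff.mpr
      rintro _ ⟨s, rfl⟩; exact h s
    exact this hxN hxU
  -- cover M by open sets {z : s • z ∈ U}
  have hcover : M ⊆ ⋃ s : S, {z : X | s • z ∈ U} := by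
    intro y hy
    obtain ⟨s, hs⟩ := key y hy
    exact Set.mem_iUnion.mpr ⟨s, hs⟩
  obtain ⟨K, hK⟩ := (hMcl.isCompact).elim_finite_subcover (fun s : S => {z : X | s • z ∈ U})
    (fun s => hU.preimage (continuous_const_smul s)) hcover
  refine ⟨K, fun s => ?_⟩
  have : s • x ∈ M := hMinv s x hxM
  obtain ⟨k, hkK, hk⟩ := Set.mem_iUnion₂.mp (hK this)
  exact ⟨k, hkK, by rwa [mul_smul]⟩
end

section
/- Let G be a topological group acting continuously on a compact Hausdorff space X, and let x ∈ X with cl(Gx) minimal. Then for every open neighborhood U of x, the set A = {g ∈ G : g·x ∈ U} is syndetic: there exists a finite set F ⊆ G with G = F·A. -/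
/-!
By minimality, every `y` in the orbit closure `Y` of `x` has `x` in its own orbit closure, so
some `g • y` lies in `U`. Hence the open sets `g⁻¹ • U` cover the compact set `Y`; the inverses of
finitely many such `g` form `F`, since each `g • x` lies in `Y`.
-/

open Set

section OrbitClosure

variable {G X : Type*} [TopologicalSpace X] [Monoid G] [MulAction G X]

theorem orbitClosure_subset_iUnion_preimage_smul {x : X}
    (hmin : ∀ y ∈ closure (range fun g : G => g • x),
      closure (range fun g : G => g • y) = closure (range fun g : G => g • x))
    {U : Set X} (hU : IsOpen U) (hx : x ∈ U) :
    closure (range fun g : G => g • x) ⊆ ⋃ g : G, (g • ·) ⁻¹' U := by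
  intro y hy
  have hxy : x ∈ closure (range fun g : G => g • y) :=
    hmin y hy ▸ subset_closure ⟨1, one_smul G x⟩
  obtain ⟨_, hgy, g, rfl⟩ := mem_closure_iff.mp hxy U hU hx
  exact mem_iUnion.mpr ⟨g, hgy⟩

theorem exists_finset_orbitClosure_subset_iUnion_preimage_smul [CompactSpace X]
    [ContinuousConstSMul G X] {x : X}
    (hmin : ∀ y ∈ closure (range fun g : G => g • x),
      closure (range fun g : G => g • y) = closure (range fun g : G => g • x))
    {U : Set X} (hU : IsOpen U) (hx : x ∈ U) :
    ∃ F : Finset G, closure (range fun g : G => g • x) ⊆ ⋃ g ∈ F, (g • ·) ⁻¹' U :=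
  isClosed_closure.isCompact.elim_finite_subcover _
    (fun g => hU.preimage (continuous_const_smul g))
    (orbitClosure_subset_iUnion_preimage_smul hmin hU hx)

end OrbitClosure

theorem stmt5_general {G X : Type*} [Group G] [TopologicalSpace G]
    [TopologicalSpace X] [CompactSpace X]
    [MulAction G X] [ContinuousSMul G X]
    (x : X)
    (hmin : ∀ y ∈ closure (Set.range fun g : G => g • x),
      closure (Set.range fun g : G => g • y) = closure (Set.range fun g : G => g • x))
    (U : Set X) (hU : IsOpen U) (hx : x ∈ U) :
    ∃ F : Finset G, ∀ g : G, ∃ f ∈ F, ∃ a : G, a • x ∈ U ∧ g = f * a := by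
  obtain ⟨F, hF⟩ := exists_finset_orbitClosure_subset_iUnion_preimage_smul hmin hU hx
  refine ⟨F.map (Equiv.inv G).toEmbedding, fun g => ?_⟩
  obtain ⟨f, hf, hfg⟩ := mem_iUnion₂.mp (hF (subset_closure ⟨g, rfl⟩))
  exact ⟨f⁻¹, by simpa using hf, f * g, by simpa [mul_smul] using hfg, by group⟩

theorem stmt5 {G X : Type*} [Group G] [TopologicalSpace G] [IsTopologicalGroup G]
    [TopologicalSpace X] [CompactSpace X] [T2Space X]
    [MulAction G X] [ContinuousSMul G X]
    (x : X)
    (hmin : ∀ y ∈ closure (Set.range fun g : G => g • x),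
      closure (Set.range fun g : G => g • y) = closure (Set.range fun g : G => g • x))
    (U : Set X) (hU : IsOpen U) (hx : x ∈ U) :
    ∃ F : Finset G, ∀ g : G, ∃ f ∈ F, ∃ a : G, a • x ∈ U ∧ g = f * a :=
  stmt5_general x hmin U hU hx
end

section
/- Let G be a topological group acting continuously on a compact Hausdorff space X, and let x ∈ X be almost periodic: for every open neighborhood U of x, the set A_U = {g ∈ G : g·x ∈ U} satisfies G = K·A_U for some compact K ⊆ G. Then the orbit closure cl(Gx) is minimal. -/
/-! If `y` lies in the orbit closure of the almost periodic point `x`, then `x` lies in the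
orbit closure of `y`: otherwise a closed neighbourhood `t` of `x` misses the orbit closure of `y`,
the orbit of `x` is contained in the compact set `K • closure U` for an open `U ∋ x` inside `t`,
so `y = k • u` with `u ∈ closure U ⊆ t`, and `u = k⁻¹ • y` would be a point of the orbit of `y`
in `t`. Hence every nonempty closed invariant subset of the orbit closure contains `x`. -/

open Set
open scoped Pointwise

theorem closure_range_smul_subset_of_mem {G X : Type*} [SMul G X] [TopologicalSpace X]
    {N : Set X} (hNcl : IsClosed N) (hNinv : ∀ g : G, ∀ y ∈ N, g • y ∈ N) {y : X} (hy : y ∈ N) :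
    closure (range fun g : G => g • y) ⊆ N :=
  closure_minimal (range_subset_iff.mpr fun g => hNinv g y hy) hNcl

theorem closure_range_smul_subset_smul_closure {G X : Type*} [Monoid G] [TopologicalSpace G]
    [TopologicalSpace X] [CompactSpace X] [T2Space X] [MulAction G X] [ContinuousSMul G X]
    {x : X} {U : Set X} {K : Set G} (hK : IsCompact K)
    (hKU : ∀ g : G, ∃ k ∈ K, ∃ a : G, a • x ∈ U ∧ g = k * a) :
    closure (range fun g : G => g • x) ⊆ K • closure U := by
  refine closure_minimal ?_ (hK.smul_set isClosed_closure.isCompact).isClosed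
  rintro _ ⟨g, rfl⟩
  obtain ⟨k, hk, a, haU, rfl⟩ := hKU g
  show (k * a) • x ∈ K • closure U
  rw [mul_smul]
  exact smul_mem_smul hk (subset_closure haU)

theorem mem_closure_range_smul_of_mem_closure_range_smul {G X : Type*} [Group G]
    [TopologicalSpace G] [TopologicalSpace X] [CompactSpace X] [T2Space X] [MulAction G X]
    [ContinuousSMul G X] {x : X}
    (hap : ∀ U : Set X, IsOpen U → x ∈ U →
      ∃ K : Set G, IsCompact K ∧ ∀ g : G, ∃ k ∈ K, ∃ a : G, a • x ∈ U ∧ g = k * a)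
    {y : X} (hy : y ∈ closure (range fun g : G => g • x)) :
    x ∈ closure (range fun g : G => g • y) := by
  by_contra hx
  obtain ⟨t, ht, htc, htC⟩ :=
    exists_mem_nhds_isClosed_subset (isClosed_closure.isOpen_compl.mem_nhds hx)
  obtain ⟨U, hUt, hUo, hxU⟩ := mem_nhds_iff.mp ht
  obtain ⟨K, hK, hKU⟩ := hap U hUo hxU
  obtain ⟨k, -, u, hu, rfl⟩ := closure_range_smul_subset_smul_closure hK hKU hy
  have hu_orbit : u ∈ closure (range fun g : G => g • k • u) :=
    subset_closure ⟨k⁻¹, inv_smul_smul k u⟩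
  exact htC (closure_minimal hUt htc hu) hu_orbit

theorem stmt6_general {G X : Type*} [Group G] [TopologicalSpace G]
    [TopologicalSpace X] [CompactSpace X] [T2Space X]
    [MulAction G X] [ContinuousSMul G X]
    (x : X)
    (hap : ∀ U : Set X, IsOpen U → x ∈ U →
      ∃ K : Set G, IsCompact K ∧ ∀ g : G, ∃ k ∈ K, ∃ a : G, a • x ∈ U ∧ g = k * a) :
    ∀ N ⊆ closure (Set.range fun g : G => g • x), N.Nonempty → IsClosed N →
      (∀ g : G, ∀ y ∈ N, g • y ∈ N) →
      N = closure (Set.range fun g : G => g • x) := by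
  rintro N hN ⟨y, hy⟩ hNcl hNinv
  have hx : x ∈ N := closure_range_smul_subset_of_mem hNcl hNinv hy
    (mem_closure_range_smul_of_mem_closure_range_smul hap (hN hy))
  exact hN.antisymm (closure_range_smul_subset_of_mem hNcl hNinv hx)

theorem stmt6 {G X : Type*} [Group G] [TopologicalSpace G] [IsTopologicalGroup G]
    [TopologicalSpace X] [CompactSpace X] [T2Space X]
    [MulAction G X] [ContinuousSMul G X]
    (x : X)
    (hap : ∀ U : Set X, IsOpen U → x ∈ U →
      ∃ K : Set G, IsCompact K ∧ ∀ g : G, ∃ k ∈ K, ∃ a : G, a • x ∈ U ∧ g = k * a) :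
    ∀ N ⊆ closure (Set.range fun g : G => g • x), N.Nonempty → IsClosed N →
      (∀ g : G, ∀ y ∈ N, g • y ∈ N) →
      N = closure (Set.range fun g : G => g • x) :=
  stmt6_general x hap
end

section
/- Let S = {f_α : α ∈ [0,1/2] ∪ {1}} where f_α : [0,1] → [0,1] is f_α(x) = αx, a monoid under composition acting on [0,1]. Then for x = 1/2 and U = (1/3, 2/3), the set A_U = {f ∈ S : f(x) ∈ U} equals {f₁} (the identity), hence S = S·A_U; yet the orbit closure cl(Sx) = {s/2 : s ∈ [0,1/2] ∪ {1}} is not minimal since {0} is a proper nonempty closed invariant subset. -/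
open Pointwise

/-- The parameter set of the monoid `S = {f_α : α ∈ [0,1/2] ∪ {1}}`, where
`f_α(x) = α x` on `[0,1]`; composition of maps corresponds to multiplication
of parameters. -/
def Dparam : Set ℝ := Set.Icc 0 (1/2) ∪ {1}

lemma image_eq : (fun α => α * (1/2)) '' Dparam = Set.Icc 0 (1/4) ∪ {(1/2 : ℝ)} := by
  ext y
  simp only [Dparam, Set.image_union, Set.mem_union, Set.mem_image, Set.mem_Icc,
    Set.mem_singleton_iff]
  constructor
  · rintro (⟨α, ⟨h0, h1⟩, rfl⟩ | ⟨α, rfl, rfl⟩)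
    · left; constructor <;> nlinarith
    · right; norm_num
  · rintro (⟨h0, h1⟩ | rfl)
    · exact Or.inl ⟨2 * y, ⟨by linarith, by linarith⟩, by ring⟩
    · exact Or.inr ⟨1, rfl, by norm_num⟩

theorem stmt9 :
    -- A_U = {f ∈ S : f(1/2) ∈ (1/3, 2/3)} is just the identity f₁
    ({α ∈ Dparam | α * (1/2) ∈ Set.Ioo (1/3 : ℝ) (2/3)} = {1}) ∧
    -- hence S = S · A_U
    (Dparam * ({1} : Set ℝ) = Dparam) ∧
    -- the orbit closure of x = 1/2 is {s/2 : s ∈ [0,1/2] ∪ {1}}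
    (closure ((fun α => α * (1/2)) '' Dparam) = (fun α => α * (1/2)) '' Dparam) ∧
    -- but it is not minimal: {0} is a proper nonempty closed invariant subset
    (({0} : Set ℝ) ⊆ (fun α => α * (1/2)) '' Dparam ∧
      IsClosed ({0} : Set ℝ) ∧
      (∀ α ∈ Dparam, ∀ y ∈ ({0} : Set ℝ), α * y ∈ ({0} : Set ℝ)) ∧
      ({0} : Set ℝ) ≠ (fun α => α * (1/2)) '' Dparam) := by
  refine ⟨?_, by simp, ?_, ?_, isClosed_singleton, ?_, ?_⟩
  · ext α
    simp only [Set.mem_setOf_eq, Dparam, Set.mem_union, Set.mem_Icc, Set.mem_Ioo,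
      Set.mem_singleton_iff]
    constructor
    · rintro ⟨h1 | rfl, h2, h3⟩
      · exfalso; nlinarith [h1.1, h1.2]
      · rfl
    · rintro rfl; norm_num
  · rw [image_eq]
    exact ((isClosed_Icc.union isClosed_singleton)).closure_eq
  · rw [image_eq]
    intro y hy
    simp only [Set.mem_singleton_iff] at hy
    subst hy
    exact Or.inl (by norm_num)
  · rintro α - y hy
    simp only [Set.mem_singleton_iff] at hy ⊢
    simp [hy]
  · rw [image_eq]
    intro h
    have : (1/2 : ℝ) ∈ ({0} : Set ℝ) := h ▸ Or.inr rfl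
    norm_num at this
end

section
/- Let S be a monoid acting continuously on a compact Hausdorff space X. If x ∈ X is almost periodic in the sense that for every open neighborhood U of x there exists finite K ⊆ S with (K·s) ∩ A_U ≠ ∅ for all s ∈ S (where A_U = {s : s·x ∈ U}), then x belongs to every nonempty closed invariant subset of cl(Sx); in particular x lies in the (unique) minimal subset of cl(Sx). -/
theorem stmt14 {S X : Type*} [Monoid S]
    [TopologicalSpace X] [CompactSpace X] [T2Space X]
    [MulAction S X] [ContinuousConstSMul S X]
    (x : X)
    (hap : ∀ U : Set X, IsOpen U → x ∈ U →
      ∃ K : Finset S, ∀ s : S, ∃ k ∈ K, (k * s) • x ∈ U) :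
    ∀ M ⊆ closure (Set.range fun s : S => s • x), M.Nonempty → IsClosed M →
      (∀ s : S, ∀ y ∈ M, s • y ∈ M) → x ∈ M := by
  intro M hMsub hMne hMcl hMinv
  by_contra hx
  -- Mᶜ is an open neighborhood of x; by regularity pick closed V ⊆ Mᶜ with V ∈ 𝓝 x
  obtain ⟨V, hVnhds, hVcl, hVsub⟩ :=
    exists_mem_nhds_isClosed_subset (hMcl.isOpen_compl.mem_nhds hx)
  obtain ⟨K, hK⟩ := hap (interior V) isOpen_interior (mem_interior_iff_mem_nhds.2 hVnhds)
  set C : Set X := ⋃ k ∈ K, (fun z : X => k • z) ⁻¹' V with hC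
  have hCcl : IsClosed C := by
    apply Set.Finite.isClosed_biUnion K.finite_toSet
    intro k _
    exact hVcl.preimage (continuous_const_smul k)
  have hrange : Set.range (fun s : S => s • x) ⊆ C := by
    rintro _ ⟨s, rfl⟩
    obtain ⟨k, hkK, hk⟩ := hK s
    exact Set.mem_biUnion hkK (by simpa [mul_smul] using interior_subset hk)
  obtain ⟨y, hy⟩ := hMne
  have hyC : y ∈ C := (hCcl.closure_subset_iff.2 hrange) (hMsub hy)
  obtain ⟨k, hkK, hk⟩ := Set.mem_iUnion₂.1 hyC
  exact hVsub hk (hMinv k y hy)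
end

section
/- Let S be a monoid acting on a compact Hausdorff space X with the action of each s ∈ S continuous, and suppose M ⊆ X is a minimal closed invariant set. Then every point m ∈ M is almost periodic: for every open U ∋ m, with A = {s ∈ S : s·m ∈ U}, there exists finite K ⊆ S such that (K·s) ∩ A ≠ ∅ for all s ∈ S. -/
theorem stmt15 {S X : Type*} [Monoid S]
    [TopologicalSpace X] [CompactSpace X] [T2Space X]
    [MulAction S X] [ContinuousConstSMul S X]
    (M : Set X) (hne : M.Nonempty) (hcl : IsClosed M)
    (hinv : ∀ s : S, ∀ y ∈ M, s • y ∈ M)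
    (hmin : ∀ y ∈ M, closure (Set.range fun s : S => s • y) = M) :
    ∀ m ∈ M, ∀ U : Set X, IsOpen U → m ∈ U →
      ∃ K : Finset S, ∀ s : S, ∃ k ∈ K, (k * s) • m ∈ U := by
  classical
  intro m hm U hU hmU
  -- For every y ∈ M, some σ with σ • y ∈ U
  have key : ∀ y : M, ∃ σ : S, σ • (y : X) ∈ U := by
    rintro ⟨y, hy⟩
    have hmcl : m ∈ closure (Set.range fun s : S => s • y) := by
      rw [hmin y hy]; exact hm
    rcases mem_closure_iff.mp hmcl U hU hmU with ⟨x, hxU, ⟨σ, rfl⟩⟩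
    exact ⟨σ, hxU⟩
  choose σ hσ using key
  have hMc : IsCompact M := hcl.isCompact
  have hcov : M ⊆ ⋃ y : M, (fun x => σ y • x) ⁻¹' U := by
    intro y hy
    exact Set.mem_iUnion.mpr ⟨⟨y, hy⟩, hσ ⟨y, hy⟩⟩
  rcases hMc.elim_finite_subcover (fun y : M => (fun x => σ y • x) ⁻¹' U)
      (fun y => hU.preimage (continuous_const_smul (σ y))) hcov with ⟨t, ht⟩
  refine ⟨t.image σ, fun s => ?_⟩
  have hsm : s • m ∈ M := hinv s m hm
  rcases Set.mem_iUnion₂.mp (ht hsm) with ⟨y, hyt, hy⟩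
  exact ⟨σ y, Finset.mem_image_of_mem σ hyt, by
    rw [mul_smul]; exact hy⟩
end

section
/- For the monoid S = {f_{p,q}(x) = px + q mod 1 : p ∈ ℚ ∩ (0,1], q ∈ ℚ ∩ [0,1]} acting on the circle 𝕋¹, every point x ∈ 𝕋¹ is almost periodic in the modified sense: for every open U ∋ x with A = {f ∈ S : f(x) ∈ U}, there exists a finite K ⊆ S such that (K∘s) ∩ A ≠ ∅ for all s ∈ S. -/
/-- The map `f_{p,q}(x) = p x + q (mod 1)` on the circle `𝕋¹ = ℝ/ℤ`, computed
via the representative of `x` in `[0,1)`. -/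
noncomputable def circleAffine (p q : ℚ) (x : UnitAddCircle) : UnitAddCircle :=
  (((p : ℝ) * ((AddCircle.equivIco 1 0 x : ℝ)) + (q : ℝ) : ℝ) : UnitAddCircle)

/-- The monoid `S = {f_{p,q} : p ∈ ℚ ∩ (0,1], q ∈ ℚ ∩ [0,1]}` as a set of
self-maps of the circle. -/
noncomputable def circleMonoid : Set (UnitAddCircle → UnitAddCircle) :=
  {g | ∃ p q : ℚ, p ∈ Set.Ioc (0 : ℚ) 1 ∧ q ∈ Set.Icc (0 : ℚ) 1 ∧ g = circleAffine p q}

/-!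
Post-composing an element of `S` with a rational rotation `f_{1,r}` stays in `S`, since only the
translation part changes (mod 1). The rotations by `j / N`, `j < N`, bring any point within `1 / N`
of `x`, so for `1 / N` below the radius of a ball around `x` inside `U` they form the set `K`.
-/

open Set

lemma circleAffine_one_apply (q : ℚ) (z : UnitAddCircle) :
    circleAffine 1 q z = z + ((q : ℝ) : UnitAddCircle) := by
  rw [circleAffine, Rat.cast_one, one_mul, AddCircle.coe_add, AddCircle.coe_equivIco]

lemma circleAffine_one_comp (p q r : ℚ) :
    circleAffine 1 r ∘ circleAffine p q = circleAffine p (Int.fract (q + r)) := by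
  funext y
  rw [Function.comp_apply, circleAffine_one_apply, circleAffine, circleAffine, Rat.cast_fract,
    AddCircle.coe_add _ _ (Int.fract _), AddCircle.coe_fract, Rat.cast_add, AddCircle.coe_add,
    AddCircle.coe_add, add_assoc]

lemma circleAffine_one_mem_circleMonoid {r : ℚ} (hr : r ∈ Icc 0 1) :
    circleAffine 1 r ∈ circleMonoid :=
  ⟨1, r, right_mem_Ioc.mpr one_pos, hr, rfl⟩

lemma circleAffine_one_comp_mem_circleMonoid {s : UnitAddCircle → UnitAddCircle}
    (hs : s ∈ circleMonoid) (r : ℚ) : circleAffine 1 r ∘ s ∈ circleMonoid := by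
  obtain ⟨p, q, hp, -, rfl⟩ := hs
  exact ⟨p, Int.fract (q + r), hp, ⟨Int.fract_nonneg _, (Int.fract_lt_one _).le⟩,
    circleAffine_one_comp p q r⟩

lemma UnitAddCircle.exists_norm_sub_div_lt (N : ℕ) (hN : 0 < N) (z : UnitAddCircle) :
    ∃ j < N, ‖z - (((j / N : ℚ) : ℝ) : UnitAddCircle)‖ < 1 / N := by
  obtain ⟨t, rfl⟩ := QuotientAddGroup.mk_surjective z
  set u := Int.fract t
  have hN' : (0 : ℝ) < N := Nat.cast_pos.mpr hN
  have hu : 0 ≤ N * u := mul_nonneg hN'.le (Int.fract_nonneg t)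
  refine ⟨⌊N * u⌋₊, (Nat.floor_lt hu).mpr ?_, ?_⟩
  · simpa using mul_lt_mul_of_pos_left (Int.fract_lt_one t) hN'
  · rw [← AddCircle.coe_fract, Rat.cast_div, Rat.cast_natCast, Rat.cast_natCast,
      ← AddCircle.coe_sub]
    refine (QuotientAddGroup.norm_mk_le_norm).trans_lt ?_
    have hj : (⌊N * u⌋₊ : ℝ) ≤ N * u := Nat.floor_le hu
    have hj' : N * u < ⌊N * u⌋₊ + 1 := Nat.lt_floor_add_one _
    rw [show u - ⌊N * u⌋₊ / N = (N * u - ⌊N * u⌋₊) / N by field_simp, Real.norm_eq_abs,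
      abs_div, abs_of_pos hN', div_lt_div_iff_of_pos_right hN', abs_lt]
    constructor <;> linarith

/-- Every point of the circle is almost periodic in the modified sense for the
semiflow `(𝕋¹, S)`: for every open `U ∋ x`, with `A = {f ∈ S : f(x) ∈ U}`,
there is a finite `K ⊆ S` with `(K ∘ s) ∩ A ≠ ∅` for all `s ∈ S`. -/
theorem stmt16 (x : UnitAddCircle) (U : Set UnitAddCircle)
    (hU : IsOpen U) (hx : x ∈ U) :
    ∃ K : Set (UnitAddCircle → UnitAddCircle), K.Finite ∧ K ⊆ circleMonoid ∧
      ∀ s ∈ circleMonoid, ∃ k ∈ K, (k ∘ s) ∈ circleMonoid ∧ (k ∘ s) x ∈ U := by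
  obtain ⟨ε, hε, hball⟩ := Metric.isOpen_iff.mp hU x hx
  obtain ⟨n, hn⟩ := exists_nat_one_div_lt hε
  set N := n + 1
  refine ⟨(fun j : ℕ => circleAffine 1 (j / N)) '' Iio N, (finite_Iio N).image _, ?_, ?_⟩
  · rintro k ⟨j, hj, rfl⟩
    exact circleAffine_one_mem_circleMonoid
      ⟨by positivity, div_le_one_of_le₀ (Nat.cast_le.mpr hj.le) (by positivity)⟩
  · intro s hs
    obtain ⟨j, hj, hnear⟩ := UnitAddCircle.exists_norm_sub_div_lt N n.succ_pos (x - s x)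
    refine ⟨circleAffine 1 (j / N), ⟨j, hj, rfl⟩, circleAffine_one_comp_mem_circleMonoid hs _,
      hball ?_⟩
    rw [Metric.mem_ball, dist_eq_norm, Function.comp_apply, circleAffine_one_apply, norm_sub_rev,
      sub_add_eq_sub_sub]
    exact hnear.trans (by exact_mod_cast hn)
end
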